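/- Let f ∈ k_∞ − k (i.e. f is irrational). Then the image of the A-module A·f in the quotient k_∞/A is dense; equivalently, for every g ∈ k_∞ and every ε > 0 there exist a, b ∈ A such that |a·f − b − g| < ε. -/

import Mathlib

open scoped Classical
open Filter Topology

noncomputable section

namespace QuantumJ

variable (Fq : Type) [Field Fq] [Fintype Fq]

/-- `k_∞ = 𝔽_q((1/T))`, modeled as the field of Laurent series in `X = 1/T`. -/
abbrev Kinf := LaurentSeries Fq

/-- The element `T = X⁻¹` of `k_∞`. -/
def Tinf : Kinf Fq := HahnSeries.single (-1 : ℤ) (1 : Fq)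

/-- The absolute value `|f| = q^{deg_T f} = q^{-ord_X f}`. -/
def av (x : Kinf Fq) : ℝ :=
  if x = 0 then 0 else (Fintype.card Fq : ℝ) ^ (-(HahnSeries.order x))

/-- The inclusion of `A = 𝔽_q[T]` into `k_∞`. -/
def toK (a : Polynomial Fq) : Kinf Fq := Polynomial.aeval (Tinf Fq) a

/-- Membership in `k = 𝔽_q(T) ⊂ k_∞`. -/
def IsRational (x : Kinf Fq) : Prop :=
  ∃ a b : Polynomial Fq, b ≠ 0 ∧ toK Fq b * x = toK Fq a

/-- `‖x‖ = min_{a ∈ A} |x - a|`, the distance from `x` to the nearest polynomial in `T`. -/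
def dA (x : Kinf Fq) : ℝ :=
  sInf {r : ℝ | ∃ a : Polynomial Fq, r = av Fq (x - toK Fq a)}

/-- `Λ_ε(f) = {λ ∈ A : ‖λ f‖ < ε}`, viewed inside `A = 𝔽_q[T]`. -/
def Lam (f : Kinf Fq) (ε : ℝ) : Set (Polynomial Fq) :=
  {l | dA Fq (toK Fq l * f) < ε}

/-- The `ε`-zeta function `ζ_{f,ε}(n) = Σ_{0 ≠ λ ∈ Λ_ε(f) monic} λ^{-n}`. -/
def zetaE (f : Kinf Fq) (ε : ℝ) (n : ℕ) : Kinf Fq :=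
  ∑' l : {l : Polynomial Fq // l ∈ Lam Fq f ε ∧ l.Monic}, ((toK Fq l.1)⁻¹) ^ n

/-- The zeta function of `A`: `ζ_A(n) = Σ_{a monic} a^{-n}`. -/
def zetaA (n : ℕ) : Kinf Fq :=
  ∑' a : {a : Polynomial Fq // a.Monic}, ((toK Fq a.1)⁻¹) ^ n

/-- `Δ_ε(f) = -(T^{q²} - T) ζ_{f,ε}(q²-1) + (T^q - T)^q ζ_{f,ε}(q-1)^{q+1}`. -/
def DeltaE (f : Kinf Fq) (ε : ℝ) : Kinf Fq :=
  -((Tinf Fq) ^ ((Fintype.card Fq) ^ 2) - Tinf Fq) * zetaE Fq f ε ((Fintype.card Fq) ^ 2 - 1)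
    + ((Tinf Fq) ^ (Fintype.card Fq) - Tinf Fq) ^ (Fintype.card Fq)
        * (zetaE Fq f ε (Fintype.card Fq - 1)) ^ (Fintype.card Fq + 1)

/-- `g_ε(f) = -(T^q - T) ζ_{f,ε}(q-1)`. -/
def gE (f : Kinf Fq) (ε : ℝ) : Kinf Fq :=
  -((Tinf Fq) ^ (Fintype.card Fq) - Tinf Fq) * zetaE Fq f ε (Fintype.card Fq - 1)

/-- The `ε`-modular invariant `j_ε(f) = g_ε(f)^{q+1}/Δ_ε(f) ∈ k_∞ ∪ {∞}`,
with `j_ε(f) = ∞` when `Δ_ε(f) = 0`. -/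
def jE (f : Kinf Fq) (ε : ℝ) : OnePoint (Kinf Fq) :=
  if DeltaE Fq f ε = 0 then OnePoint.infty
  else ((gE Fq f ε ^ (Fintype.card Fq + 1) / DeltaE Fq f ε : Kinf Fq) : OnePoint (Kinf Fq))

/-- The quantum modular invariant `j^qt(f)`: the set of limit points in `k_∞ ∪ {∞}`
of `j_{ε_i}(f)` along sequences `ε_i → 0`, `ε_i > 0`. -/
def jqt (f : Kinf Fq) : Set (OnePoint (Kinf Fq)) :=
  {ξ | ∃ e : ℕ → ℝ, (∀ i, 0 < e i) ∧ Tendsto e atTop (𝓝 0) ∧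
    Tendsto (fun i => jE Fq f (e i)) atTop (𝓝 ξ)}

set_option linter.unusedSectionVars false

lemma Tinf_pow (n : ℕ) : (Tinf Fq) ^ n = HahnSeries.single (-(n:ℤ)) (1 : Fq) := by
  rw [Tinf, HahnSeries.single_pow]; simp

lemma algebraMap_eq_C (c : Fq) :
    (algebraMap Fq (Kinf Fq)) c = HahnSeries.C c := by
  simp [HahnSeries.algebraMap_apply', PowerSeries.algebraMap_apply]

lemma toK_monomial (n : ℕ) (c : Fq) :
    toK Fq (Polynomial.monomial n c) = HahnSeries.single (-(n:ℤ)) c := by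
  rw [toK, ← Polynomial.C_mul_X_pow_eq_monomial, map_mul, Polynomial.aeval_C, map_pow,
    Polynomial.aeval_X, Tinf_pow, algebraMap_eq_C, HahnSeries.C_apply,
    HahnSeries.single_mul_single, zero_add, mul_one]

lemma toK_coeff_pos (b : Polynomial Fq) {j : ℤ} (hj : 0 < j) : (toK Fq b).coeff j = 0 := by
  induction b using Polynomial.induction_on' with
  | add p q hp hq =>
    simp only [toK] at hp hq ⊢
    simp [map_add, HahnSeries.coeff_add, hp, hq]
  | monomial n c =>
    rw [toK_monomial, HahnSeries.coeff_single_of_ne]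
    omega

lemma toK_coeff_neg (b : Polynomial Fq) (i : ℕ) : (toK Fq b).coeff (-(i:ℤ)) = b.coeff i := by
  induction b using Polynomial.induction_on' with
  | add p q hp hq =>
    simp only [toK] at hp hq ⊢
    simp [map_add, HahnSeries.coeff_add, hp, hq]
  | monomial n c =>
    rw [toK_monomial, HahnSeries.coeff_single, Polynomial.coeff_monomial]
    by_cases h : i = n
    · simp [h]
    · rw [if_neg (by omega), if_neg (by omega)]

lemma Tpow_mul_coeff (e : ℕ) (x : Kinf Fq) (j : ℤ) :
    ((Tinf Fq)^e * x).coeff j = x.coeff (j + e) := by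
  rw [Tinf_pow, show j = (j + e) + (-(e:ℤ)) by ring, HahnSeries.coeff_single_mul_add, one_mul]
  ring_nf

lemma sum_coeff {ι : Type*} (s : Finset ι) (f : ι → Kinf Fq) (j : ℤ) :
    (∑ i ∈ s, f i).coeff j = ∑ i ∈ s, (f i).coeff j := by
  classical
  induction s using Finset.cons_induction with
  | empty => simp
  | cons a s ha ih => simp [Finset.sum_insert ha, HahnSeries.coeff_add, ih]

lemma order_gt (x : Kinf Fq) (hx : x ≠ 0) (n : ℤ) (h : ∀ j ≤ n, x.coeff j = 0) :
    n < x.order := by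
  by_contra h'
  exact (HahnSeries.coeff_order_eq_zero.not.mpr hx) (h _ (not_lt.mp h'))

/-- polynomial part -/
lemma exists_polyPart (x : Kinf Fq) :
    ∃ b : Polynomial Fq, ∀ j : ℤ, j ≤ 0 → (x - toK Fq b).coeff j = 0 := by
  set N : ℕ := (-x.order).toNat + 1 with hN
  refine ⟨∑ i ∈ Finset.range N, Polynomial.monomial i (x.coeff (-(i:ℤ))), fun j hj => ?_⟩
  rw [HahnSeries.coeff_sub, sub_eq_zero]
  simp only [toK, map_sum]
  have hcoeff : ∀ i ∈ Finset.range N,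
      ((Polynomial.aeval (Tinf Fq)) (Polynomial.monomial i (x.coeff (-(i:ℤ))))).coeff j
        = if i = (-j).toNat then x.coeff j else 0 := by
    intro i _
    rw [show (Polynomial.aeval (Tinf Fq)) (Polynomial.monomial i (x.coeff (-(i:ℤ))))
      = toK Fq (Polynomial.monomial i (x.coeff (-(i:ℤ)))) from rfl]
    rw [toK_monomial, HahnSeries.coeff_single]
    by_cases h : j = -(i:ℤ)
    · rw [if_pos h, if_pos (by omega), h]
    · rw [if_neg h, if_neg (by omega)]
  rw [sum_coeff, Finset.sum_congr rfl hcoeff]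
  rw [Finset.sum_ite_eq' (Finset.range N) ((-j).toNat) (fun _ => x.coeff j)]
  by_cases hjN : (-j).toNat ∈ Finset.range N
  · rw [if_pos hjN]
  · rw [if_neg hjN]
    simp only [Finset.mem_range] at hjN
    exact HahnSeries.coeff_eq_zero_of_lt_order (by omega)

lemma single_mul_coeff (c : Fq) (e : ℤ) (x : Kinf Fq) (j : ℤ) :
    (HahnSeries.single e c * x).coeff j = c * x.coeff (j - e) := by
  rw [show j = (j - e) + e by ring, HahnSeries.coeff_single_mul_add]
  ring_nf

lemma exists_small (f : Kinf Fq) (hf : ¬ IsRational Fq f) (n : ℕ) :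
    ∃ (h : Kinf Fq) (a b : Polynomial Fq), h = toK Fq a * f - toK Fq b ∧ h ≠ 0 ∧
      (n:ℤ) < h.order := by
  have hcard : Fintype.card (Fin n → Fq) < Fintype.card (Fin (n+1) → Fq) := by
    rw [Fintype.card_fun, Fintype.card_fun, Fintype.card_fin, Fintype.card_fin]
    exact Nat.pow_lt_pow_right Fintype.one_lt_card (Nat.lt_succ_self n)
  set φ : (Fin (n+1) → Fq) → (Fin n → Fq) := fun v i =>
    (toK Fq ((Polynomial.degreeLTEquiv Fq (n+1)).symm v : Polynomial Fq) * f).coeff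
      (((i:ℕ):ℤ)+1) with hφ
  obtain ⟨v, w, hvw, heq⟩ := Fintype.exists_ne_map_eq_of_card_lt φ hcard
  set a1 : Polynomial Fq := ((Polynomial.degreeLTEquiv Fq (n+1)).symm v : Polynomial Fq)
  set a2 : Polynomial Fq := ((Polynomial.degreeLTEquiv Fq (n+1)).symm w : Polynomial Fq)
  set a : Polynomial Fq := a1 - a2 with ha_def
  have ha : a ≠ 0 := by
    rw [ha_def, sub_ne_zero]
    intro hcontra
    exact hvw ((Polynomial.degreeLTEquiv Fq (n+1)).symm.injective (Subtype.ext hcontra))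
  have hcoeffs : ∀ i : Fin n, (toK Fq a * f).coeff (((i:ℕ):ℤ)+1) = 0 := by
    intro i
    have : toK Fq a = toK Fq a1 - toK Fq a2 := by simp only [toK, ha_def, map_sub]
    rw [this, sub_mul, HahnSeries.coeff_sub]
    have := congrFun heq i
    simp only [hφ] at this
    rw [this]
    ring
  obtain ⟨b, hb⟩ := exists_polyPart Fq (toK Fq a * f)
  refine ⟨toK Fq a * f - toK Fq b, a, b, rfl, ?_, ?_⟩
  · intro h0
    rw [sub_eq_zero] at h0
    exact hf ⟨b, a, ha, h0⟩
  · apply order_gt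
    · intro h0
      rw [sub_eq_zero] at h0
      exact hf ⟨b, a, ha, h0⟩
    intro j hj
    rcases le_or_gt j 0 with hj0 | hj0
    · exact hb j hj0
    · rw [HahnSeries.coeff_sub, toK_coeff_pos Fq b hj0, sub_zero]
      have hlt : j.toNat - 1 < n := by omega
      have := hcoeffs ⟨j.toNat - 1, hlt⟩
      rwa [show (((j.toNat - 1 : ℕ):ℤ))+1 = j by omega] at this

lemma greedy (h : Kinf Fq) (hne : h ≠ 0) (g' : Kinf Fq)
    (hg : ∀ j : ℤ, j ≤ 0 → g'.coeff j = 0) :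
    ∀ k : ℕ, (k:ℤ) ≤ h.order → ∃ C : Polynomial Fq, ∀ j : ℤ, j ≤ (k:ℤ) →
      (toK Fq C * h - g').coeff j = 0 := by
  intro k
  induction k with
  | zero =>
    intro _
    refine ⟨0, fun j hj => ?_⟩
    rw [show toK Fq 0 = 0 by simp [toK], zero_mul, zero_sub, HahnSeries.coeff_neg,
      hg j (by exact_mod_cast hj), neg_zero]
  | succ k ih =>
    intro hk1
    obtain ⟨C, hC⟩ := ih (le_trans (by exact_mod_cast Nat.le_succ k) hk1)
    have hu : h.coeff h.order ≠ 0 := HahnSeries.coeff_order_eq_zero.not.mpr hne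
    set u := h.coeff h.order with hu_def
    set d := (toK Fq C * h - g').coeff ((k:ℤ)+1) with hd_def
    set e : ℕ := (h.order - ((k:ℕ):ℤ) - 1).toNat with he_def
    have he : (e:ℤ) = h.order - k - 1 := Int.toNat_of_nonneg (by push_cast at hk1 ⊢; omega)
    refine ⟨C - Polynomial.monomial e (d * u⁻¹), fun j hj => ?_⟩
    have hsub : toK Fq (C - Polynomial.monomial e (d * u⁻¹)) * h - g'
        = (toK Fq C * h - g') - HahnSeries.single (-(e:ℤ)) (d * u⁻¹) * h := by
      rw [show toK Fq (C - Polynomial.monomial e (d * u⁻¹))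
        = toK Fq C - toK Fq (Polynomial.monomial e (d * u⁻¹)) by simp only [toK, map_sub]]
      rw [toK_monomial]
      ring
    rw [hsub, HahnSeries.coeff_sub, single_mul_coeff]
    have hje : j - -(e:ℤ) = j + e := by ring
    rw [hje]
    rcases eq_or_lt_of_le hj with hj1 | hj1
    · -- j = k + 1
      have hme : j + (e:ℤ) = h.order := by push_cast at hj1; omega
      rw [hme, ← hu_def, hj1]
      push_cast
      rw [← hd_def]
      field_simp
      simp
    · -- j ≤ k
      have hjk : j ≤ (k:ℤ) := by push_cast at hj1; omega
      rw [hC j hjk, HahnSeries.coeff_eq_zero_of_lt_order (x := h) (i := j + e) (by omega),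
        mul_zero, sub_zero]

/-- For irrational `f ∈ k_∞ − k`, the image of `A·f` in `k_∞/A` is dense:
for every `g ∈ k_∞` and `ε > 0` there are `a, b ∈ A` with `|a·f − b − g| < ε`. -/
theorem kronecker_density (f : Kinf Fq) (hf : ¬ IsRational Fq f) :
    ∀ g : Kinf Fq, ∀ ε : ℝ, 0 < ε →
      ∃ a b : Polynomial Fq, av Fq (toK Fq a * f - toK Fq b - g) < ε := by
  intro g ε hε
  have hq1 : (1:ℝ) < (Fintype.card Fq : ℝ) := by exact_mod_cast Fintype.one_lt_card
  obtain ⟨N, hN⟩ : ∃ N : ℕ, (Fintype.card Fq : ℝ) ^ (-(N:ℤ)) < ε := by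
    obtain ⟨N, hN⟩ := exists_pow_lt_of_lt_one hε (by
      rw [inv_lt_one_iff₀]; right; exact hq1 : (Fintype.card Fq : ℝ)⁻¹ < 1)
    exact ⟨N, by rw [zpow_neg, zpow_natCast, ← inv_pow]; exact hN⟩
  obtain ⟨h, a, b, hab, hne, hord⟩ := exists_small Fq f hf N
  obtain ⟨bg, hbg⟩ := exists_polyPart Fq g
  set g' := g - toK Fq bg with hg'def
  set k : ℕ := h.order.toNat with hkdef
  have hk : (k:ℤ) = h.order := Int.toNat_of_nonneg (by omega)
  obtain ⟨C, hC⟩ := greedy Fq h hne g' hbg k (le_of_eq hk)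
  refine ⟨C * a, C * b - bg, ?_⟩
  have hx : toK Fq (C*a) * f - toK Fq (C*b - bg) - g = toK Fq C * h - g' := by
    rw [hab, hg'def]
    simp only [toK, map_mul, map_sub]
    ring
  rw [hx]
  by_cases hx0 : toK Fq C * h - g' = 0
  · rw [av, if_pos hx0]; exact hε
  · rw [av, if_neg hx0]
    have hogt : (k:ℤ) < (toK Fq C * h - g').order := order_gt Fq _ hx0 k hC
    have hle : -(toK Fq C * h - g').order ≤ -(N:ℤ) := by omega
    exact lt_of_le_of_lt (zpow_le_zpow_right₀ hq1.le hle) hN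


end QuantumJ
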